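/- Let Γ be a strongly connected digraph with dim(Γ) = k and diameter d. Then k + d ≤ |A(Γ)| ≤ ((d² + 3d − 2)/2)^(2k) + (2k − d)·d^(2k−1) + k² − k, where |A(Γ)| is the number of arcs of Γ. -/

import Mathlib

/-!  Common definitions for weak metric dimension of digraphs.

A digraph is modelled by a vertex type `V` together with an arc relation
`A : V → V → Prop` (simplicity is expressed by `Irreflexive A`). -/

/-- There is a directed walk of length `n` from `x` to `y`. -/
def walkLen {V : Type*} (A : V → V → Prop) : ℕ → V → V → Prop
  | 0 => fun x y => x = y
  | n + 1 => fun x y => ∃ z, A x z ∧ walkLen A n z y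

/-- `∂(x,y)`: the length of a shortest directed path from `x` to `y`. -/
noncomputable def ddist {V : Type*} (A : V → V → Prop) (x y : V) : ℕ :=
  sInf {n | walkLen A n x y}

/-- The two way distance `∂̃(x,y) = (∂(x,y), ∂(y,x))`. -/
noncomputable def twoDist {V : Type*} (A : V → V → Prop) (x y : V) : ℕ × ℕ :=
  (ddist A x y, ddist A y x)

/-- Strong connectivity: any vertex can be reached from any vertex by a directed walk. -/
def IsStronglyConnected {V : Type*} (A : V → V → Prop) : Prop :=
  ∀ x y : V, ∃ n, walkLen A n x y

/-- `S` is a weakly resolving set: distinct vertices have different tuples of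
two way distances from the vertices of `S`. -/
def IsWeaklyResolving {V : Type*} (A : V → V → Prop) (S : Set V) : Prop :=
  ∀ u v : V, (∀ w ∈ S, twoDist A w u = twoDist A w v) → u = v

/-- The weak metric dimension: minimum cardinality of a weakly resolving set. -/
noncomputable def wdim {V : Type*} [Fintype V] (A : V → V → Prop) : ℕ :=
  sInf {k | ∃ S : Finset V, S.card = k ∧ IsWeaklyResolving A ↑S}

/-- The diameter: the maximum of `∂(x,y)` over all ordered pairs of vertices. -/
noncomputable def diam {V : Type*} [Fintype V] (A : V → V → Prop) : ℕ :=
  sSup {m | ∃ x y : V, ddist A x y = m}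

/-- `f(n,d)`: the least positive integer `k` with `k + d^(2k) ≥ n`. -/
noncomputable def fnd (n d : ℕ) : ℕ :=
  sInf {k | 0 < k ∧ n ≤ k + d ^ (2 * k)}

/-- An isomorphism from `(V, A)` onto `(W, B)` exists. -/
def IsIsoTo {V W : Type*} (A : V → V → Prop) (B : W → W → Prop) : Prop :=
  ∃ e : V ≃ W, ∀ x y, A x y ↔ B (e x) (e y)

/-- The digraph of Example 2.3: vertices `v_1, …, v_n` are the elements
`0, …, n-1` of `Fin n` (so `v_i` is `i - 1`). -/
def egArc (n d : ℕ) : Fin n → Fin n → Prop := fun x y =>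
  (x.val = n - 1 ∧ y.val ≤ n - d) ∨
  (x.val ≤ n - d ∧ y.val = n - d + 1) ∨
  (n - d + 1 ≤ x.val ∧ x.val ≤ n - 2 ∧ y.val = x.val + 1)

/-- The `r`-th (0-based) coordinate of the tuple `v_{j+1}` in Construction 2.4;
it lies in `{1, …, d}` and `j = Σ_r (coord r - 1) d^r`. -/
def gcoord (d j r : ℕ) : ℕ := j / d ^ r % d + 1

/-- The arc relation of Construction 2.4, with the `u`-vertices `Fin k` on the left
and the `v`-vertices `Fin m` on the right of the sum. -/
def gammaArcKM (d k : ℕ) {m : ℕ} : Fin k ⊕ Fin m → Fin k ⊕ Fin m → Prop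
  | .inl _, .inl _ => False
  | .inl i, .inr j => gcoord d j.val (2 * i.val) = 1
  | .inr j, .inl i => gcoord d j.val (2 * i.val + 1) = 1
  | .inr j, .inr l => j ≠ l ∧ ∀ r < k,
      gcoord d l.val (2 * r) ≤ gcoord d j.val (2 * r) + 1 ∧
      gcoord d j.val (2 * r + 1) ≤ gcoord d l.val (2 * r + 1) + 1

/-- The arc relation of `Γ̄`: `Γ` of Construction 2.4 together with symmetric arcs
between any two distinct `u`-vertices. -/
def gammaBarArcKM (d k : ℕ) {m : ℕ} : Fin k ⊕ Fin m → Fin k ⊕ Fin m → Prop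
  | .inl i, .inl i' => i ≠ i'
  | x, y => gammaArcKM d k x y

/-- The directed cycle of length `m` on `Fin m`. -/
def cycArc (m : ℕ) [NeZero m] : Fin m → Fin m → Prop := fun x y => y = x + 1

/-- `σ` is an automorphism of the digraph `(V, A)`. -/
def IsDigraphAuto {V : Type*} (A : V → V → Prop) (σ : V ≃ V) : Prop :=
  ∀ a b, A a b ↔ A (σ a) (σ b)

/-- Vertex-transitivity. -/
def IsVertexTransitive {V : Type*} (A : V → V → Prop) : Prop :=
  ∀ x y : V, ∃ σ : V ≃ V, IsDigraphAuto A σ ∧ σ x = y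

/-- Weak distance-transitivity. -/
def IsWeaklyDistanceTransitive {V : Type*} (A : V → V → Prop) : Prop :=
  ∀ x y x' y' : V, twoDist A x y = twoDist A x' y' →
    ∃ σ : V ≃ V, IsDigraphAuto A σ ∧ σ x = x' ∧ σ y = y'

/-- Weak distance-regularity. -/
noncomputable def IsWeaklyDistanceRegular {V : Type*} (A : V → V → Prop) : Prop :=
  ∀ i j : ℕ × ℕ, (∃ a b : V, twoDist A a b = i) → (∃ a b : V, twoDist A a b = j) →
    ∀ x y x' y' : V, twoDist A x y = twoDist A x' y' →
      Set.ncard {z : V | twoDist A x z = i ∧ twoDist A z y = j} =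
      Set.ncard {z : V | twoDist A x' z = i ∧ twoDist A z y' = j}

/-- The complete digraph `K_t`. -/
def Krel (t : ℕ) : Fin t → Fin t → Prop := fun x y => x ≠ y

/-- The null digraph `K̄_t`. -/
def Nrel (t : ℕ) : Fin t → Fin t → Prop := fun _ _ => False

/-- The directed path `P_2` of length `1`. -/
def P2rel : Fin 2 → Fin 2 → Prop := fun x y => x = 0 ∧ y = 1

/-- The digraph `G_1` on `{0,1,2}` with arcs `(0,1),(1,2),(2,1),(2,0)`. -/
def G1rel : Fin 3 → Fin 3 → Prop := fun x y =>
  (x = 0 ∧ y = 1) ∨ (x = 1 ∧ y = 2) ∨ (x = 2 ∧ y = 1) ∨ (x = 2 ∧ y = 0)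

/-- The digraph `G_2` on `{0,1,2}` with arcs `(0,1),(1,0),(1,2),(2,1),(2,0)`. -/
def G2rel : Fin 3 → Fin 3 → Prop := fun x y =>
  (x = 0 ∧ y = 1) ∨ (x = 1 ∧ y = 0) ∨ (x = 1 ∧ y = 2) ∨ (x = 2 ∧ y = 1) ∨ (x = 2 ∧ y = 0)

/-- The generalized lexicographic product `G[H₀, H₁, H₂]` for a digraph `G` on `{0,1,2}`. -/
def glex3 {α β γ : Type*} (G : Fin 3 → Fin 3 → Prop)
    (H0 : α → α → Prop) (H1 : β → β → Prop) (H2 : γ → γ → Prop) :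
    α ⊕ β ⊕ γ → α ⊕ β ⊕ γ → Prop
  | .inl x, .inl y => H0 x y
  | .inl _, .inr (.inl _) => G 0 1
  | .inl _, .inr (.inr _) => G 0 2
  | .inr (.inl _), .inl _ => G 1 0
  | .inr (.inl x), .inr (.inl y) => H1 x y
  | .inr (.inl _), .inr (.inr _) => G 1 2
  | .inr (.inr _), .inl _ => G 2 0
  | .inr (.inr _), .inr (.inl _) => G 2 1
  | .inr (.inr x), .inr (.inr y) => H2 x y

/-- A clique in a digraph: the two way distance between any two distinct
vertices of `S` is `(1,1)`. -/
noncomputable def DClique {V : Type*} (A : V → V → Prop) (S : Set V) : Prop :=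
  ∀ u ∈ S, ∀ v ∈ S, u ≠ v → twoDist A u v = (1, 1)

/-- An independent set in a digraph: no arcs inside `R`. -/
def DIndependent {V : Type*} (A : V → V → Prop) (R : Set V) : Prop :=
  ∀ u ∈ R, ∀ v ∈ R, ¬ A u v

/-! For the lower bound, the vertices at distances `1, …, d` from one end `x` of a diametral
path are told apart by `x` alone, so all other vertices form a weakly resolving set and
`k + d ≤ |V|`; every vertex has an out-arc, so `|V| ≤ |A(Γ)|`.

For the upper bound fix a weakly resolving set `W` with `|W| = k`. A vertex outside `W` is
determined by its vector of two way distances from `W`, whose entries lie in `{1, …, d}²`, and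
along an arc `u → v` we have `∂(w,v) ≤ ∂(w,u) + 1` and `∂(u,w) ≤ ∂(v,w) + 1`. There are at most
`k² - k` arcs inside `W`. An arc between a landmark `w` and a vertex outside `W` pins one
entry of the other end's vector to `1`, leaving at most `d^(2k-1)` choices per landmark and
direction. An arc outside `W` is determined by the two vectors; each landmark allows
`((d² + 3d - 2)/2)²` pairs of entries, and the two vectors must differ, which leaves
`((d² + 3d - 2)/2)^(2k) - d^(2k)` possibilities. -/

section Distance

variable {V : Type*} {A : V → V → Prop}

theorem walkLen_add_iff {m n : ℕ} {x y : V} :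
    walkLen A (m + n) x y ↔ ∃ z, walkLen A m x z ∧ walkLen A n z y := by
  induction m generalizing x with
  | zero => simp [walkLen]
  | succ m ih =>
    rw [Nat.succ_add]
    simp only [walkLen, ih]
    grind

theorem ddist_le_of_walkLen {n : ℕ} {x y : V} (h : walkLen A n x y) : ddist A x y ≤ n :=
  Nat.sInf_le h

theorem walkLen_ddist (hsc : IsStronglyConnected A) (x y : V) :
    walkLen A (ddist A x y) x y :=
  Nat.sInf_mem (hsc x y)

theorem ddist_self (x : V) : ddist A x x = 0 :=
  Nat.sInf_eq_zero.mpr (Or.inl rfl)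

theorem ddist_eq_zero_iff (hsc : IsStronglyConnected A) {x y : V} :
    ddist A x y = 0 ↔ x = y := by
  refine ⟨fun h => ?_, fun h => h ▸ ddist_self x⟩
  have hwalk := walkLen_ddist hsc x y
  rwa [h] at hwalk

theorem ddist_pos (hsc : IsStronglyConnected A) {x y : V} (h : x ≠ y) : 0 < ddist A x y :=
  Nat.pos_of_ne_zero fun h0 => h ((ddist_eq_zero_iff hsc).mp h0)

theorem ddist_le_ddist_add_one_of_arc_right (hsc : IsStronglyConnected A) (w : V) {u v : V}
    (h : A u v) : ddist A w v ≤ ddist A w u + 1 :=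
  ddist_le_of_walkLen (walkLen_add_iff.mpr ⟨u, walkLen_ddist hsc w u, v, h, rfl⟩)

theorem ddist_le_ddist_add_one_of_arc_left (hsc : IsStronglyConnected A) (w : V) {u v : V}
    (h : A u v) : ddist A u w ≤ ddist A v w + 1 :=
  ddist_le_of_walkLen (n := ddist A v w + 1) ⟨v, h, walkLen_ddist hsc v w⟩

theorem ddist_eq_one_of_arc (hirr : Irreflexive A) (hsc : IsStronglyConnected A) {x y : V}
    (h : A x y) : ddist A x y = 1 :=
  le_antisymm (ddist_le_of_walkLen ⟨y, h, rfl⟩) (ddist_pos hsc fun hxy => hirr x (hxy ▸ h))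

theorem exists_arc_of_ne (hsc : IsStronglyConnected A) {x y : V} (h : x ≠ y) : ∃ z, A x z := by
  obtain ⟨n, hn⟩ := Nat.exists_eq_add_one_of_ne_zero (ddist_pos hsc h).ne'
  have hwalk := walkLen_ddist hsc x y
  rw [hn] at hwalk
  obtain ⟨z, hz, -⟩ := hwalk
  exact ⟨z, hz⟩

theorem exists_ddist_eq_of_le (hsc : IsStronglyConnected A) {x y : V} {i : ℕ}
    (hi : i ≤ ddist A x y) : ∃ z, ddist A x z = i := by
  have hwalk := walkLen_ddist hsc x y
  rw [← Nat.add_sub_cancel' hi, walkLen_add_iff] at hwalk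
  obtain ⟨z, hxz, hzy⟩ := hwalk
  refine ⟨z, le_antisymm (ddist_le_of_walkLen hxz) ?_⟩
  have := ddist_le_of_walkLen (walkLen_add_iff.mpr ⟨z, walkLen_ddist hsc x z, hzy⟩)
  omega

theorem isWeaklyResolving_of_notMem (hsc : IsStronglyConnected A) {S : Set V}
    (h : ∀ u ∉ S, ∀ v ∉ S, (∀ w ∈ S, twoDist A w u = twoDist A w v) → u = v) :
    IsWeaklyResolving A S := by
  have landmark : ∀ u ∈ S, ∀ v, twoDist A u u = twoDist A u v → u = v := fun u _ v huv =>
    (ddist_eq_zero_iff hsc).mp (by simpa [twoDist, ddist_self] using (congrArg Prod.fst huv).symm)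
  intro u v huv
  by_cases hu : u ∈ S
  · exact landmark u hu v (huv u hu)
  by_cases hv : v ∈ S
  · exact (landmark v hv u (huv v hv).symm).symm
  exact h u hu v hv huv

end Distance

section Dimension

variable {V : Type*} [Fintype V] {A : V → V → Prop}

theorem bddAbove_setOf_ddist : BddAbove {m | ∃ x y : V, ddist A x y = m} :=
  ((Set.finite_range fun p : V × V => ddist A p.1 p.2).subset
    (by rintro _ ⟨x, y, rfl⟩; exact ⟨(x, y), rfl⟩)).bddAbove

theorem ddist_le_diam (x y : V) : ddist A x y ≤ diam A :=
  le_csSup bddAbove_setOf_ddist ⟨x, y, rfl⟩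

theorem exists_ddist_eq_diam [Nonempty V] : ∃ x y : V, ddist A x y = diam A :=
  Nat.sSup_mem (s := {m | ∃ x y : V, ddist A x y = m})
    ⟨0, Classical.arbitrary V, Classical.arbitrary V, ddist_self _⟩ bddAbove_setOf_ddist

theorem wdim_le_card {S : Finset V} (hS : IsWeaklyResolving A S) : wdim A ≤ S.card :=
  Nat.sInf_le ⟨S, rfl, hS⟩

theorem diam_eq_zero_of_subsingleton [Subsingleton V] : diam A = 0 :=
  Nat.eq_zero_of_le_zero <| csSup_le' fun _ ⟨x, y, h⟩ => by
    rw [← h, Subsingleton.elim x y, ddist_self]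

theorem wdim_eq_zero_of_subsingleton [Subsingleton V] : wdim A = 0 :=
  Nat.eq_zero_of_le_zero <| wdim_le_card (S := ∅) fun u v _ => Subsingleton.elim u v

theorem exists_isWeaklyResolving_card_eq_wdim (hsc : IsStronglyConnected A) :
    ∃ S : Finset V, S.card = wdim A ∧ IsWeaklyResolving A S :=
  Nat.sInf_mem (s := {k | ∃ S : Finset V, S.card = k ∧ IsWeaklyResolving A ↑S})
    ⟨_, Finset.univ, rfl, isWeaklyResolving_of_notMem hsc (by simp)⟩

theorem wdim_add_diam_le_card [Nonempty V] (hsc : IsStronglyConnected A) :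
    wdim A + diam A ≤ Fintype.card V := by
  classical
  obtain ⟨x, y, hxy⟩ := exists_ddist_eq_diam (A := A)
  have hlevels : ∀ i ∈ Finset.Icc 1 (diam A), ∃ z, ddist A x z = i := fun i hi =>
    exists_ddist_eq_of_le hsc (hxy ▸ (Finset.mem_Icc.mp hi).2)
  choose! g hg using hlevels
  set T := (Finset.Icc 1 (diam A)).image g
  have hT : T.card = diam A := by
    rw [Finset.card_image_of_injOn fun i hi j hj hij => by
      rw [← hg i hi, ← hg j hj, hij], Nat.card_Icc, Nat.add_sub_cancel]
  have hxT : x ∉ T := fun hx => by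
    obtain ⟨i, hi, hix⟩ := Finset.mem_image.mp hx
    have := (Finset.mem_Icc.mp hi).1
    rw [← hg i hi, hix, ddist_self] at this
    omega
  have hres : IsWeaklyResolving A ↑(Finset.univ \ T) := by
    refine isWeaklyResolving_of_notMem hsc fun u hu v hv huv => ?_
    simp only [Finset.coe_sdiff, Finset.coe_univ, Set.mem_sdiff, Set.mem_univ, true_and,
      not_not, Finset.mem_coe, T, Finset.mem_image] at hu hv
    obtain ⟨i, hi, rfl⟩ := hu
    obtain ⟨j, hj, rfl⟩ := hv
    have hx := congrArg Prod.fst (huv x (by simpa using hxT))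
    simp only [twoDist, hg i hi, hg j hj] at hx
    rw [hx]
  have := wdim_le_card hres
  rw [Finset.card_univ_sdiff, hT] at this
  have := T.card_le_univ
  omega

theorem card_le_ncard_arcs [Nontrivial V] (hsc : IsStronglyConnected A) :
    Fintype.card V ≤ {p : V × V | A p.1 p.2}.ncard := by
  choose next hnext using fun v : V => exists_arc_of_ne hsc (exists_ne v).choose_spec.symm
  simpa using Set.ncard_le_ncard_of_injOn (fun v => (v, next v)) (fun v _ => hnext v)
    (fun u _ v _ h => (Prod.ext_iff.mp h).1) (Set.toFinite _) (s := Set.univ)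

end Dimension

theorem card_piFinset_update_const {ι α : Type*} [Fintype ι] [DecidableEq ι] (i : ι)
    (s t : Finset α) :
    (Fintype.piFinset (Function.update (fun _ => s) i t)).card =
      t.card * s.card ^ (Fintype.card ι - 1) := by
  rw [Fintype.card_piFinset, ← Finset.mul_prod_erase _ _ (Finset.mem_univ i),
    Function.update_self, Finset.prod_congr rfl fun j hj => by
      rw [Function.update_of_ne (Finset.ne_of_mem_erase hj)],
    Finset.prod_const, Finset.card_erase_of_mem (Finset.mem_univ i), Finset.card_univ]

def distBox (d : ℕ) : Finset (ℕ × ℕ) := Finset.Icc 1 d ×ˢ Finset.Icc 1 d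

theorem card_distBox (d : ℕ) : (distBox d).card = d * d := by
  simp [distBox]

-- The pairs `(∂(w,u), ∂(w,v))` that can occur along an arc `u → v`.
def stepPairs (d : ℕ) : Finset (ℕ × ℕ) :=
  (distBox d).filter fun q => q.2 ≤ q.1 + 1

theorem stepPairs_succ {d : ℕ} (hd : 1 ≤ d) :
    stepPairs (d + 1) =
      insert (d, d + 1) (stepPairs d ∪ (Finset.Icc 1 (d + 1)).image fun b => (d + 1, b)) := by
  ext ⟨a, b⟩
  simp only [stepPairs, distBox, Finset.mem_insert, Finset.mem_union, Finset.mem_filter,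
    Finset.mem_product, Finset.mem_Icc, Finset.mem_image, Prod.mk.injEq]
  constructor
  · intro h
    by_cases ha : a = d + 1
    · exact Or.inr (Or.inr ⟨b, by omega, ha.symm, rfl⟩)
    · omega
  · rintro (⟨rfl, rfl⟩ | h | ⟨b, hb, rfl, rfl⟩) <;> omega

theorem two_mul_card_stepPairs {d : ℕ} (hd : 1 ≤ d) :
    2 * (stepPairs d).card + 2 = d * d + 3 * d := by
  induction d, hd using Nat.le_induction with
  | base => decide
  | succ d hd ih =>
    rw [stepPairs_succ hd, Finset.card_insert_of_notMem, Finset.card_union_of_disjoint,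
      Finset.card_image_of_injective _ fun b b' h => (Prod.mk.inj h).2, Nat.card_Icc]
    · rw [Nat.add_sub_cancel]; linarith
    · simp only [Finset.disjoint_left, stepPairs, distBox, Finset.mem_filter, Finset.mem_product,
        Finset.mem_Icc, Finset.mem_image]
      rintro ⟨a, b⟩ h ⟨c, -, hc⟩
      simp only [Prod.mk.injEq] at hc
      omega
    · simp [stepPairs, distBox]

def diagPairs (d : ℕ) : Finset ((ℕ × ℕ) × (ℕ × ℕ)) :=
  (distBox d).image fun q => ((q.1, q.1), (q.2, q.2))

theorem card_diagPairs (d : ℕ) : (diagPairs d).card = d * d := by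
  rw [diagPairs, Finset.card_image_of_injective _ fun q q' h => by
    simp only [Prod.mk.injEq] at h; exact Prod.ext h.1.1 h.2.1, card_distBox]

theorem diagPairs_subset_stepPairs (d : ℕ) : diagPairs d ⊆ stepPairs d ×ˢ stepPairs d := by
  intro q hq
  simp only [diagPairs, distBox, Finset.mem_image, Finset.mem_product, Finset.mem_Icc] at hq
  obtain ⟨⟨a, b⟩, h, rfl⟩ := hq
  simp only [stepPairs, distBox, Finset.mem_product, Finset.mem_filter, Finset.mem_Icc]
  omega

noncomputable def twoDistVector {V : Type*} (A : V → V → Prop) (W : Finset V) (v : V) :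
    W → ℕ × ℕ :=
  fun w => twoDist A w v

-- The second pair is reversed so that, along an arc, both pairs lie in `stepPairs d`.
noncomputable def arcCode {V : Type*} (A : V → V → Prop) (W : Finset V) (p : V × V) :
    W → (ℕ × ℕ) × (ℕ × ℕ) :=
  fun w => ((ddist A w p.1, ddist A w p.2), (ddist A p.2 w, ddist A p.1 w))

section Landmarks

variable {V : Type*} {A : V → V → Prop} {W : Finset V} {d : ℕ}

theorem IsWeaklyResolving.twoDistVector_injective (hW : IsWeaklyResolving A W) :
    Function.Injective (twoDistVector A W) :=
  fun u v h => hW u v fun w hw => congrFun h ⟨w, hw⟩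

theorem IsWeaklyResolving.arcCode_injective (hW : IsWeaklyResolving A W) :
    Function.Injective (arcCode A W) := by
  intro p q h
  have hcoord := fun w => congrFun h w
  simp only [arcCode, Prod.mk.injEq] at hcoord
  exact Prod.ext (hW.twoDistVector_injective (funext fun w => by
      simp [twoDistVector, twoDist, (hcoord w).1.1, (hcoord w).2.2]))
    (hW.twoDistVector_injective (funext fun w => by
      simp [twoDistVector, twoDist, (hcoord w).1.2, (hcoord w).2.1]))

theorem twoDist_mem_distBox (hsc : IsStronglyConnected A) (hd : ∀ x y, ddist A x y ≤ d)
    {w v : V} (h : w ≠ v) : twoDist A w v ∈ distBox d := by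
  simp only [distBox, twoDist, Finset.mem_product, Finset.mem_Icc]
  exact ⟨⟨ddist_pos hsc h, hd w v⟩, ⟨ddist_pos hsc (Ne.symm h), hd v w⟩⟩

theorem arcCode_mem_stepPairs (hsc : IsStronglyConnected A) (hd : ∀ x y, ddist A x y ≤ d)
    {u v : V} (huv : A u v) (hu : u ∉ W) (hv : v ∉ W) (w : W) :
    arcCode A W (u, v) w ∈ stepPairs d ×ˢ stepPairs d := by
  have hbox := fun x (hx : x ∉ W) => twoDist_mem_distBox hsc hd (w := w) (v := x)
    fun h => hx (h ▸ w.2)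
  have hu' := hbox u hu
  have hv' := hbox v hv
  simp only [distBox, twoDist, Finset.mem_product, Finset.mem_Icc] at hu' hv'
  simp only [arcCode, stepPairs, distBox, Finset.mem_product, Finset.mem_filter,
    Finset.mem_Icc]
  exact ⟨⟨by omega, ddist_le_ddist_add_one_of_arc_right hsc w huv⟩,
    ⟨by omega, ddist_le_ddist_add_one_of_arc_left hsc w huv⟩⟩

theorem twoDistVector_eq_of_arcCode_mem_diagPairs [DecidableEq V] {p : V × V}
    (h : arcCode A W p ∈ Fintype.piFinset fun _ => diagPairs d) :
    twoDistVector A W p.1 = twoDistVector A W p.2 := by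
  funext w
  obtain ⟨q, -, hq⟩ := Finset.mem_image.mp (Fintype.mem_piFinset.mp h w)
  simp only [arcCode, Prod.mk.injEq] at hq
  simp only [twoDistVector, twoDist]
  rw [← hq.1.1, ← hq.1.2, ← hq.2.1, ← hq.2.2]

theorem card_le_of_forall_twoDist_mem [DecidableEq V] (hsc : IsStronglyConnected A)
    (hd : ∀ x y, ddist A x y ≤ d) (hW : IsWeaklyResolving A W) (w : W) {t : Finset (ℕ × ℕ)}
    {s : Finset V} (hs : ∀ v ∈ s, v ∉ W ∧ twoDist A w v ∈ t) :
    s.card ≤ t.card * (d * d) ^ (W.card - 1) := by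
  have hmaps : ∀ v ∈ s, twoDistVector A W v ∈
      Fintype.piFinset (Function.update (fun _ => distBox d) w t) := by
    intro v hv
    refine Fintype.mem_piFinset.mpr fun w' => ?_
    rcases eq_or_ne w' w with rfl | hw'
    · simpa [twoDistVector] using (hs v hv).2
    · rw [Function.update_of_ne hw']
      exact twoDist_mem_distBox hsc hd fun h => (hs v hv).1 (h ▸ w'.2)
  have := Finset.card_le_card_of_injOn _ hmaps hW.twoDistVector_injective.injOn
  rwa [card_piFinset_update_const, card_distBox, Fintype.card_coe] at this

end Landmarks

section ArcCount

variable {V : Type*} [Fintype V] [DecidableEq V] {A : V → V → Prop} [DecidableRel A]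
  {W : Finset V} {d : ℕ}

theorem card_arcs_inside_le (hirr : Irreflexive A) :
    (Finset.univ.filter fun p : V × V => A p.1 p.2 ∧ p.1 ∈ W ∧ p.2 ∈ W).card ≤
      W.card * W.card - W.card := by
  rw [← Finset.offDiag_card]
  refine Finset.card_le_card fun p hp => ?_
  simp only [Finset.mem_filter, Finset.mem_univ, true_and, Finset.mem_offDiag] at hp ⊢
  exact ⟨hp.2.1, hp.2.2, fun h => hirr _ (h ▸ hp.1)⟩

theorem card_arcs_out_of_le (hirr : Irreflexive A) (hsc : IsStronglyConnected A)
    (hd : ∀ x y, ddist A x y ≤ d) (hW : IsWeaklyResolving A W) :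
    (Finset.univ.filter fun p : V × V => A p.1 p.2 ∧ p.1 ∈ W ∧ p.2 ∉ W).card ≤
      d * (d * d) ^ (W.card - 1) * W.card := by
  refine Finset.card_le_mul_card_image_of_maps_to (f := Prod.fst) (by simp_all) _ fun w hw => ?_
  rw [← Finset.card_image_of_injOn (f := Prod.snd) fun p hp q hq h => by
    simp only [Finset.mem_coe, Finset.mem_filter] at hp hq
    exact Prod.ext (hp.2.trans hq.2.symm) h]
  refine (card_le_of_forall_twoDist_mem hsc hd hW ⟨w, hw⟩ (t := {1} ×ˢ Finset.Icc 1 d)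
    fun v hv => ?_).trans_eq (by simp)
  simp only [Finset.mem_image, Finset.mem_filter, Finset.mem_univ, true_and] at hv
  obtain ⟨⟨u, v⟩, ⟨⟨huv, -, hv⟩, rfl⟩, rfl⟩ := hv
  have hne : v ≠ u := fun h => hv (h ▸ hw)
  exact ⟨hv, Finset.mem_product.mpr
    ⟨Finset.mem_singleton.mpr (ddist_eq_one_of_arc hirr hsc huv),
      Finset.mem_Icc.mpr ⟨ddist_pos hsc hne, hd v u⟩⟩⟩

theorem card_arcs_into_le (hirr : Irreflexive A) (hsc : IsStronglyConnected A)
    (hd : ∀ x y, ddist A x y ≤ d) (hW : IsWeaklyResolving A W) :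
    (Finset.univ.filter fun p : V × V => A p.1 p.2 ∧ p.1 ∉ W ∧ p.2 ∈ W).card ≤
      d * (d * d) ^ (W.card - 1) * W.card := by
  refine Finset.card_le_mul_card_image_of_maps_to (f := Prod.snd) (by simp_all) _ fun w hw => ?_
  rw [← Finset.card_image_of_injOn (f := Prod.fst) fun p hp q hq h => by
    simp only [Finset.mem_coe, Finset.mem_filter] at hp hq
    exact Prod.ext h (hp.2.trans hq.2.symm)]
  refine (card_le_of_forall_twoDist_mem hsc hd hW ⟨w, hw⟩ (t := Finset.Icc 1 d ×ˢ {1})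
    fun u hu => ?_).trans_eq (by simp)
  simp only [Finset.mem_image, Finset.mem_filter, Finset.mem_univ, true_and] at hu
  obtain ⟨⟨u, v⟩, ⟨⟨huv, hu, -⟩, rfl⟩, rfl⟩ := hu
  have hne : v ≠ u := fun h => hu (h ▸ hw)
  exact ⟨hu, Finset.mem_product.mpr ⟨Finset.mem_Icc.mpr ⟨ddist_pos hsc hne, hd v u⟩,
    Finset.mem_singleton.mpr (ddist_eq_one_of_arc hirr hsc huv)⟩⟩

theorem card_arcs_outside_add_le (hirr : Irreflexive A) (hsc : IsStronglyConnected A)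
    (hd : ∀ x y, ddist A x y ≤ d) (hW : IsWeaklyResolving A W) :
    (Finset.univ.filter fun p : V × V => A p.1 p.2 ∧ p.1 ∉ W ∧ p.2 ∉ W).card +
      (d * d) ^ W.card ≤ ((stepPairs d).card * (stepPairs d).card) ^ W.card := by
  have hdiag : Fintype.piFinset (fun _ : W => diagPairs d) ⊆
      Fintype.piFinset fun _ => stepPairs d ×ˢ stepPairs d :=
    Fintype.piFinset_subset _ _ fun _ => diagPairs_subset_stepPairs d
  have hmaps : ∀ p ∈ Finset.univ.filter fun p : V × V => A p.1 p.2 ∧ p.1 ∉ W ∧ p.2 ∉ W,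
      arcCode A W p ∈ Fintype.piFinset (fun _ => stepPairs d ×ˢ stepPairs d) \
        Fintype.piFinset fun _ => diagPairs d := by
    rintro ⟨u, v⟩ hp
    simp only [Finset.mem_filter, Finset.mem_univ, true_and] at hp
    refine Finset.mem_sdiff.mpr ⟨Fintype.mem_piFinset.mpr
      (arcCode_mem_stepPairs hsc hd hp.1 hp.2.1 hp.2.2), fun hmem => ?_⟩
    have huv : u = v :=
      hW.twoDistVector_injective (twoDistVector_eq_of_arcCode_mem_diagPairs hmem)
    exact hirr v (huv ▸ hp.1)
  have hcard := Finset.card_le_card_of_injOn _ hmaps hW.arcCode_injective.injOn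
  have hle := Finset.card_le_card hdiag
  rw [Finset.card_sdiff_of_subset hdiag] at hcard
  simp only [Fintype.card_piFinset, Finset.prod_const, card_diagPairs, Finset.card_product,
    Finset.card_univ, Fintype.card_coe] at hcard hle
  omega

end ArcCount

theorem ncard_arcs_add_le {V : Type*} [Fintype V] {A : V → V → Prop} {W : Finset V} {d : ℕ}
    (hirr : Irreflexive A) (hsc : IsStronglyConnected A) (hd : ∀ x y, ddist A x y ≤ d)
    (hW : IsWeaklyResolving A W) :
    {p : V × V | A p.1 p.2}.ncard + W.card + (d * d) ^ W.card ≤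
      W.card * W.card + 2 * (d * (d * d) ^ (W.card - 1) * W.card) +
        ((stepPairs d).card * (stepPairs d).card) ^ W.card := by
  classical
  set arcs := Finset.univ.filter fun p : V × V => A p.1 p.2
  have hsplit_src := arcs.card_filter_add_card_filter_not fun p => p.1 ∈ W
  have hsplit_in := (arcs.filter fun p => p.1 ∈ W).card_filter_add_card_filter_not
    fun p => p.2 ∈ W
  have hsplit_out := (arcs.filter fun p => p.1 ∉ W).card_filter_add_card_filter_not
    fun p => p.2 ∈ W
  simp only [arcs, Finset.filter_filter, and_assoc] at hsplit_src hsplit_in hsplit_out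
  have h_inside := card_arcs_inside_le (W := W) hirr
  have h_out_of := card_arcs_out_of_le hirr hsc hd hW
  have h_into := card_arcs_into_le hirr hsc hd hW
  have h_outside := card_arcs_outside_add_le hirr hsc hd hW
  have := W.card.le_mul_self
  rw [Set.ncard_eq_toFinset_card', Set.toFinset_ofPred]
  omega

/-- Theorem 2.8, inequality (3). For a `k`-dimensional digraph `Γ`
with diameter `d`, `k + d ≤ |A(Γ)| ≤ ((d²+3d-2)/2)^(2k) + (2k-d)d^(2k-1) + k² - k`. -/
theorem arc_count_bounds {V : Type*} [Fintype V] (A : V → V → Prop)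
    (hirr : Irreflexive A) (hsc : IsStronglyConnected A)
    (k d : ℕ) (hdim : wdim A = k) (hdiam : diam A = d) :
    (k + d : ℤ) ≤ (Set.ncard {p : V × V | A p.1 p.2} : ℤ) ∧
    (Set.ncard {p : V × V | A p.1 p.2} : ℤ) ≤
      (((d : ℤ) ^ 2 + 3 * (d : ℤ) - 2) / 2) ^ (2 * k) +
        (2 * (k : ℤ) - (d : ℤ)) * (d : ℤ) ^ (2 * k - 1) + (k : ℤ) ^ 2 - (k : ℤ) := by
  rcases subsingleton_or_nontrivial V with hV | hV
  · have harcs : {p : V × V | A p.1 p.2} = ∅ :=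
      Set.eq_empty_of_forall_notMem fun p (hp : A p.1 p.2) =>
        hirr p.1 (Subsingleton.elim p.2 p.1 ▸ hp)
    subst hdim hdiam
    simp [harcs, wdim_eq_zero_of_subsingleton, diam_eq_zero_of_subsingleton]
  obtain ⟨W, hWk, hW⟩ := exists_isWeaklyResolving_card_eq_wdim hsc
  rw [hdim] at hWk
  have hd : ∀ x y, ddist A x y ≤ d := hdiam ▸ ddist_le_diam
  obtain ⟨x, y, hxy⟩ := exists_pair_ne V
  have hd1 : 1 ≤ d := (ddist_pos hsc hxy).trans_le (hd x y)
  obtain ⟨k, rfl⟩ : ∃ k', k = k' + 1 := Nat.exists_eq_add_one_of_ne_zero fun hk0 =>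
    hxy (hW x y (by simp [Finset.card_eq_zero.mp (hWk.trans hk0)]))
  have hlower := (wdim_add_diam_le_card hsc).trans (card_le_ncard_arcs (A := A) hsc)
  refine ⟨by rw [hdim, hdiam] at hlower; exact_mod_cast hlower, ?_⟩
  have hcount := ncard_arcs_add_le hirr hsc hd hW
  have hC : (d : ℤ) ^ 2 + 3 * d - 2 = 2 * (stepPairs d).card := by
    have h := two_mul_card_stepPairs hd1
    zify at h
    linear_combination -h
  rw [hWk, Nat.add_sub_cancel] at hcount
  rw [hC, Int.mul_ediv_cancel_left _ two_ne_zero, show 2 * (k + 1) - 1 = 2 * k + 1 by omega]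
  zify at hcount
  push_cast
  linear_combination hcount
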